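/- arXiv:1008.2295 — 2 statements merged into one kernel-verified Lean document; each statement's English description precedes it below -/
import Mathlib

section
/- Let m be a positive integer and let α₁, α₂ be positive irrational real numbers with 1/α₁ + 1/α₂ = m. Then every positive integer N appears exactly m times in the multiset union S(α₁,0) ∪ S(α₂,0); that is, r_{α₁,0}(N) + r_{α₂,0}(N) = m for every integer N ≥ 1. -/
/-!
The positive `n` with `⌊n α + β⌋ = N` are the integers in `[(N - β)/α, (N + 1 - β)/α)`, so
`r_{α,β}(N) = ⌈(N + 1 - β)/α⌉ - ⌈(N - β)/α⌉` once `N > β`. For `M ≠ 0`, `M/α₁` is irrational while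
`M/α₁ + M/α₂ = M m` is an integer, so the two ceilings add up to `M m + 1`; subtracting this
identity at `M = N` from the one at `M = N + 1` leaves `m`.
-/

/-- The number of positive integers `n` with `⌊n·α + β⌋ = N`, i.e. the multiplicity
of `N` in the Beatty sequence `S(α,β)`. -/
noncomputable def beattyCount (α β : ℝ) (N : ℤ) : ℕ :=
  Nat.card {n : ℕ // 0 < n ∧ ⌊(n : ℝ) * α + β⌋ = N}

theorem Irrational.ceil_add_ceil_of_add_eq_intCast {x y : ℝ} (hx : Irrational x) {k : ℤ}
    (hk : x + y = k) : ⌈x⌉ + ⌈y⌉ = k + 1 := by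
  have hy : y = -x + k := by linarith
  have hx_ceil : ⌈x⌉ = ⌊x⌋ + 1 :=
    (Int.ceil_eq_floor_add_one_iff_notMem x).mpr fun ⟨z, hz⟩ => hx.ne_int z hz.symm
  rw [hy, Int.ceil_add_intCast, Int.ceil_neg, hx_ceil]
  ring

theorem beattyCount_eq_ceil_sub_ceil {α β : ℝ} (hα : 0 < α) {N : ℤ} (hN : β < N) :
    (beattyCount α β N : ℤ) = ⌈((N : ℝ) + 1 - β) / α⌉ - ⌈((N : ℝ) - β) / α⌉ := by
  set a := ⌈((N : ℝ) - β) / α⌉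
  set b := ⌈((N : ℝ) + 1 - β) / α⌉
  have ha : 0 < a := Int.ceil_pos.mpr (div_pos (by linarith) hα)
  have hab : a ≤ b := Int.ceil_mono (by gcongr; linarith)
  have hmem : ∀ n : ℕ, (0 < n ∧ ⌊(n : ℝ) * α + β⌋ = N) ↔ n ∈ Set.Ico a.toNat b.toNat := by
    intro n
    rw [Set.mem_Ico, Int.toNat_le, Int.lt_toNat, Int.ceil_le, Int.lt_ceil, Int.floor_eq_iff,
      div_le_iff₀ hα, lt_div_iff₀ hα]
    push_cast
    constructor
    · rintro ⟨-, hlo, hhi⟩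
      constructor <;> linarith
    · rintro ⟨hlo, hhi⟩
      have hn : (0 : ℝ) < n := pos_of_mul_pos_left (hlo.trans_lt' (by linarith)) hα.le
      exact ⟨by exact_mod_cast hn, by linarith, by linarith⟩
  rw [beattyCount, Nat.card_congr (Equiv.subtypeEquivRight hmem), Nat.card_coe_set_eq,
    Set.ncard_eq_toFinset_card', Set.toFinset_Ico, Nat.card_Ico]
  omega

theorem homogeneous_pair_exact_mcover_general (m : ℕ) (α₁ α₂ : ℝ)
    (h1 : 0 < α₁) (h2 : 0 < α₂) (hi1 : Irrational α₁)
    (hsum : 1 / α₁ + 1 / α₂ = (m : ℝ)) :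
    ∀ N : ℤ, 1 ≤ N → beattyCount α₁ 0 N + beattyCount α₂ 0 N = m := by
  intro N hN
  have hceil : ∀ M : ℤ, M ≠ 0 → ⌈(M : ℝ) / α₁⌉ + ⌈(M : ℝ) / α₂⌉ = M * m + 1 := fun M hM =>
    (hi1.intCast_div hM).ceil_add_ceil_of_add_eq_intCast <| by
      push_cast
      rw [← hsum, mul_add, mul_one_div, mul_one_div]
  have hN0 : (0 : ℝ) < N := by exact_mod_cast hN
  have hN1 := hceil (N + 1) (by omega)
  push_cast at hN1
  zify
  rw [beattyCount_eq_ceil_sub_ceil h1 hN0, beattyCount_eq_ceil_sub_ceil h2 hN0]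
  simp only [sub_zero]
  linarith [hceil N (by omega)]

theorem homogeneous_pair_exact_mcover (m : ℕ) (hm : 0 < m) (α₁ α₂ : ℝ)
    (h1 : 0 < α₁) (h2 : 0 < α₂) (hi1 : Irrational α₁) (hi2 : Irrational α₂)
    (hsum : 1 / α₁ + 1 / α₂ = (m : ℝ)) :
    ∀ N : ℤ, 1 ≤ N → beattyCount α₁ 0 N + beattyCount α₂ 0 N = m :=
  homogeneous_pair_exact_mcover_general m α₁ α₂ h1 h2 hi1 hsum
end

section
/- With the notation of the fractional Beatty setup: if q > 2 and p₁ < p₀, then r(N) ∈ {⌊p/q⌋, ⌈p/q⌉, ⌈p/q⌉ + 1} for every positive integer N. -/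
/-- `r(N)`: the number of pairs `(i, n)`, `i ∈ {1,2}`, `n ≥ 1`, with `⌊n·αᵢ⌋ = N`. -/
noncomputable def fracBeattyR (α₁ α₂ : ℝ) (N : ℤ) : ℕ :=
  beattyCount α₁ 0 N + beattyCount α₂ 0 N

section FloorRing

variable {R : Type*} [Ring R] [LinearOrder R] [IsStrictOrderedRing R] [FloorRing R]

lemma Int.ceil_eq_floor_add_one_of_fract_pos {a : R} (h : 0 < Int.fract a) : ⌈a⌉ = ⌊a⌋ + 1 :=
  (Int.ceil_eq_floor_add_one_iff_notMem a).2 fun ⟨z, hz⟩ => by simp [← hz] at h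

lemma Int.floor_add_le_of_fract_le {x y : R} (h : Int.fract x ≤ Int.fract (x + y)) :
    ⌊x + y⌋ ≤ ⌊x⌋ + ⌊y⌋ := by
  have hdiff : y - ((⌊x + y⌋ - ⌊x⌋ : ℤ) : R) = Int.fract (x + y) - Int.fract x := by
    push_cast
    unfold Int.fract
    abel
  have := Int.le_floor.2 (sub_nonneg.1 (hdiff ▸ sub_nonneg.2 h))
  omega

lemma Int.floor_add_sub_floor_mem_Icc (a x : R) :
    ⌊a + x⌋ - ⌊a⌋ ∈ Set.Icc ⌊x⌋ (⌊x⌋ + 1) := by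
  have := Int.le_floor_add a x
  have := Int.le_floor_add_floor a x
  constructor <;> omega

end FloorRing

lemma beattyCount_zero_eq_ceil_sub_ceil {α : ℝ} (hα : 0 < α) {N : ℤ} (hN : 0 < N) :
    (beattyCount α 0 N : ℤ) = ⌈((N : ℝ) + 1) / α⌉ - ⌈(N : ℝ) / α⌉ := by
  have hlo : 0 < ⌈(N : ℝ) / α⌉ := Int.ceil_pos.2 (by positivity)
  have hle : ⌈(N : ℝ) / α⌉ ≤ ⌈((N : ℝ) + 1) / α⌉ := Int.ceil_mono (by gcongr; linarith)
  have hmem : ∀ n : ℕ, (0 < n ∧ ⌊(n : ℝ) * α + 0⌋ = N) ↔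
      n ∈ Finset.Ico ⌈(N : ℝ) / α⌉.toNat ⌈((N : ℝ) + 1) / α⌉.toNat := by
    intro n
    have hcast : ((n : ℤ) : ℝ) = n := Int.cast_natCast n
    rw [Finset.mem_Ico, add_zero, Int.floor_eq_iff, ← div_le_iff₀ hα, ← lt_div_iff₀ hα,
      ← hcast, ← Int.ceil_le, ← Int.lt_ceil]
    omega
  rw [beattyCount, Nat.card_congr (Equiv.subtypeEquivRight hmem), Nat.card_eq_finsetCard,
    Nat.card_Ico]
  omega

lemma Irrational.ceil_eq_floor_add_one {x : ℝ} (hx : Irrational x) : ⌈x⌉ = ⌊x⌋ + 1 :=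
  Int.ceil_eq_floor_add_one_of_fract_pos (Int.fract_pos.2 (hx.ne_int _))

lemma beattyCount_zero_eq_floor_sub_floor {α : ℝ} (hα : 0 < α) (hirr : Irrational α) {N : ℤ}
    (hN : 0 < N) : (beattyCount α 0 N : ℤ) = ⌊((N : ℝ) + 1) / α⌋ - ⌊(N : ℝ) / α⌋ := by
  have hθ : Irrational α⁻¹ := hirr.inv
  have hN₀ : Irrational ((N : ℝ) * α⁻¹) := hθ.intCast_mul hN.ne'
  have hN₁ : Irrational (((N : ℝ) + 1) * α⁻¹) := by
    exact_mod_cast hθ.intCast_mul (show N + 1 ≠ 0 by omega)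
  rw [beattyCount_zero_eq_ceil_sub_ceil hα hN, div_eq_mul_inv, div_eq_mul_inv,
    hN₀.ceil_eq_floor_add_one, hN₁.ceil_eq_floor_add_one]
  ring

lemma fracBeattyR_mem_Icc {α₁ α₂ : ℝ} (h₁ : 0 < α₁) (h₂ : 0 < α₂) (hi₁ : Irrational α₁)
    (hi₂ : Irrational α₂) (hfract : Int.fract (1 / α₁) ≤ Int.fract (1 / α₁ + 1 / α₂))
    {N : ℤ} (hN : 0 < N) :
    (fracBeattyR α₁ α₂ N : ℤ) ∈ Set.Icc ⌊1 / α₁ + 1 / α₂⌋ (⌊1 / α₁ + 1 / α₂⌋ + 2) := by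
  have hsplit := Int.floor_add_le_of_fract_le hfract
  have := Int.le_floor_add (1 / α₁) (1 / α₂)
  obtain ⟨d₁lo, d₁hi⟩ := Int.floor_add_sub_floor_mem_Icc ((N : ℝ) / α₁) (1 / α₁)
  obtain ⟨d₂lo, d₂hi⟩ := Int.floor_add_sub_floor_mem_Icc ((N : ℝ) / α₂) (1 / α₂)
  rw [fracBeattyR, Nat.cast_add, beattyCount_zero_eq_floor_sub_floor h₁ hi₁ hN,
    beattyCount_zero_eq_floor_sub_floor h₂ hi₂ hN, add_div, add_div]
  constructor <;> omega

theorem fractional_beatty_values_case_one_general (p q : ℕ) (hq : 0 < q)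
    (α₁ α₂ : ℝ) (h1 : 0 < α₁) (h2 : 0 < α₂)
    (hi1 : Irrational α₁) (hi2 : Irrational α₂)
    (hsum : 1 / α₁ + 1 / α₂ = (p : ℝ) / q)
    (p₁ : ℕ)
    (hfr₂ : Int.fract (1 / α₁) < ((p₁ : ℝ) + 1) / q)
    (hcase : p₁ < p % q) :
    ∀ N : ℤ, 1 ≤ N →
      (fracBeattyR α₁ α₂ N : ℤ) = ⌊(p : ℚ) / q⌋ ∨
      (fracBeattyR α₁ α₂ N : ℤ) = ⌈(p : ℚ) / q⌉ ∨
      (fracBeattyR α₁ α₂ N : ℤ) = ⌈(p : ℚ) / q⌉ + 1 := by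
  intro N hN
  have hfractP : Int.fract ((p : ℝ) / q) = (p % q : ℕ) / q :=
    Int.fract_div_natCast_eq_div_natCast_mod
  have hcarry : Int.fract (1 / α₁) ≤ Int.fract (1 / α₁ + 1 / α₂) := by
    rw [hsum, hfractP]
    exact hfr₂.le.trans (by gcongr; exact_mod_cast hcase)
  have hfloor : ⌊(p : ℚ) / q⌋ = ⌊(p : ℝ) / q⌋ := by
    rw [← Rat.floor_cast (α := ℝ)]
    push_cast
    rfl
  have hceil : ⌈(p : ℚ) / q⌉ = ⌊(p : ℝ) / q⌋ + 1 := by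
    rw [← Rat.ceil_cast (α := ℝ)]
    push_cast
    refine Int.ceil_eq_floor_add_one_of_fract_pos ?_
    rw [hfractP]
    exact div_pos (Nat.cast_pos.2 (by omega)) (Nat.cast_pos.2 hq)
  obtain ⟨hlo, hhi⟩ := fracBeattyR_mem_Icc h1 h2 hi1 hi2 hcarry (N := N) (by omega)
  rw [hsum] at hlo hhi
  omega

theorem fractional_beatty_values_case_one (p q : ℕ) (hp : 0 < p) (hq : 0 < q)
    (hpq : Nat.Coprime p q) (α₁ α₂ : ℝ) (h1 : 0 < α₁) (h2 : 0 < α₂)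
    (hi1 : Irrational α₁) (hi2 : Irrational α₂)
    (hsum : 1 / α₁ + 1 / α₂ = (p : ℝ) / q)
    (p₁ : ℕ) (hp₁ : p₁ < q)
    (hfr₁ : (p₁ : ℝ) / q < Int.fract (1 / α₁))
    (hfr₂ : Int.fract (1 / α₁) < ((p₁ : ℝ) + 1) / q)
    (hq2 : 2 < q) (hcase : p₁ < p % q) :
    ∀ N : ℤ, 1 ≤ N →
      (fracBeattyR α₁ α₂ N : ℤ) = ⌊(p : ℚ) / q⌋ ∨
      (fracBeattyR α₁ α₂ N : ℤ) = ⌈(p : ℚ) / q⌉ ∨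
      (fracBeattyR α₁ α₂ N : ℤ) = ⌈(p : ℚ) / q⌉ + 1 :=
  fractional_beatty_values_case_one_general p q hq α₁ α₂ h1 h2 hi1 hi2 hsum p₁ hfr₂ hcase
end
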